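/- Let k ≥ 2, let a_0,…,a_k, b_0,…,b_k ∈ ℂ and g_n : ℂ → ℂ for n ≥ 0. Suppose ρ, γ ∈ ℂ are nonzero with P(ρ) = Q(ρ) = 0 and P(γ) = Q(γ) = 0, where in the case γ = ρ we additionally assume P′(ρ) = Q′(ρ) = 0 (i.e. ρ is a double root of both P and Q). If (x_n)_{n ≥ −k} is a solution of equation (★), then setting t_n := x_n − ρ x_{n−1} (n ≥ −k+1) and r_n := t_n − γ t_{n−1} (n ≥ −k+2), the sequence (r_n) satisfies the second factor equation (FE1) for all n ≥ 0, and moreover t_{n+1} = γ t_n + r_{n+1} and x_{n+1} = ρ x_n + t_{n+1} for all n ≥ 0. -/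
import Mathlib


open Finset Polynomial

/-- The polynomial `P(u) = u^(k+1) - ∑_{i=0}^{k} a_i u^(k-i)`. -/
noncomputable def polyP {F : Type*} [Field F] (k : ℕ) (a : ℕ → F) : Polynomial F :=
  X ^ (k + 1) - ∑ i ∈ range (k + 1), C (a i) * X ^ (k - i)

/-- The polynomial `Q(u) = ∑_{i=0}^{k} b_i u^(k-i)`. -/
noncomputable def polyQ {F : Type*} [Field F] (k : ℕ) (b : ℕ → F) : Polynomial F :=
  ∑ i ∈ range (k + 1), C (b i) * X ^ (k - i)

/-- `p_i = ρ^(i+1) - a_0 ρ^i - a_1 ρ^(i-1) - ⋯ - a_i`. -/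
def coefp {F : Type*} [Field F] (a : ℕ → F) (ρ : F) (i : ℕ) : F :=
  ρ ^ (i + 1) - ∑ m ∈ range (i + 1), a m * ρ ^ (i - m)

/-- `q_i = b_0 ρ^i + b_1 ρ^(i-1) + ⋯ + b_i`. -/
def coefq {F : Type*} [Field F] (b : ℕ → F) (ρ : F) (i : ℕ) : F :=
  ∑ m ∈ range (i + 1), b m * ρ ^ (i - m)

/-- A sequence `x : ℤ → F` is a solution of equation (★):
`x_{n+1} = ∑_{i=0}^{k} a_i x_{n-i} + g_n (∑_{i=0}^{k} b_i x_{n-i})` for all `n ≥ 0`. -/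
def IsSolutionStar {F : Type*} [Field F] (k : ℕ) (a b : ℕ → F) (g : ℤ → F → F)
    (x : ℤ → F) : Prop :=
  ∀ n : ℤ, 0 ≤ n →
    x (n + 1) = (∑ i ∈ range (k + 1), a i * x (n - i)) +
      g n (∑ i ∈ range (k + 1), b i * x (n - i))

/-- A sequence `t : ℤ → F` is a solution of the factor equation (FE) with root `ρ`:
`t_{n+1} = -∑_{i=0}^{k-1} p_i t_{n-i} + g_n (∑_{i=0}^{k-1} q_i t_{n-i})` for all `n ≥ 0`. -/
def IsSolutionFE {F : Type*} [Field F] (k : ℕ) (a b : ℕ → F) (g : ℤ → F → F) (ρ : F)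
    (t : ℤ → F) : Prop :=
  ∀ n : ℤ, 0 ≤ n →
    t (n + 1) = -(∑ i ∈ range k, coefp a ρ i * t (n - i)) +
      g n (∑ i ∈ range k, coefq b ρ i * t (n - i))

/-- `p′_j = γ^(j+1) + p_0 γ^j + ⋯ + p_j`. -/
noncomputable def coefp' (a : ℕ → ℂ) (ρ γ : ℂ) (j : ℕ) : ℂ :=
  γ ^ (j + 1) + ∑ m ∈ range (j + 1), coefp a ρ m * γ ^ (j - m)

/-- `q′_j = q_0 γ^j + q_1 γ^(j-1) + ⋯ + q_j`. -/
noncomputable def coefq' (b : ℕ → ℂ) (ρ γ : ℂ) (j : ℕ) : ℂ :=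
  ∑ m ∈ range (j + 1), coefq b ρ m * γ ^ (j - m)

/-- A sequence `r : ℤ → ℂ` is a solution of the second factor equation (FE1):
`r_{n+1} = -∑_{j=0}^{k-2} p′_j r_{n-j} + g_n (∑_{j=0}^{k-2} q′_j r_{n-j})` for all `n ≥ 0`. -/
def IsSolutionFE1 (k : ℕ) (a b : ℕ → ℂ) (g : ℤ → ℂ → ℂ) (ρ γ : ℂ) (r : ℤ → ℂ) : Prop :=
  ∀ n : ℤ, 0 ≤ n →
    r (n + 1) = -(∑ j ∈ range (k - 1), coefp' a ρ γ j * r (n - j)) +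
      g n (∑ j ∈ range (k - 1), coefq' b ρ γ j * r (n - j))

/-! ### Auxiliary lemmas -/

lemma coefp_zero (a : ℕ → ℂ) (ρ : ℂ) : coefp a ρ 0 = ρ - a 0 := by simp [coefp]

lemma coefq_zero (b : ℕ → ℂ) (ρ : ℂ) : coefq b ρ 0 = b 0 := by simp [coefq]

lemma shift_sum (c : ℕ → ℂ) (ρ : ℂ) (i : ℕ) :
    ∑ m ∈ range (i+1), c m * ρ ^ (i+1-m) = ρ * ∑ m ∈ range (i+1), c m * ρ ^ (i-m) := by
  rw [mul_sum]
  refine sum_congr rfl fun m hm => ?_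
  rw [mem_range] at hm
  rw [show i+1-m = (i-m)+1 from by omega, pow_succ]
  ring

lemma coefp_succ (a : ℕ → ℂ) (ρ : ℂ) (i : ℕ) :
    coefp a ρ (i+1) = ρ * coefp a ρ i - a (i+1) := by
  unfold coefp
  rw [sum_range_succ, shift_sum]
  simp [pow_succ]
  ring

lemma coefq_succ (b : ℕ → ℂ) (ρ : ℂ) (i : ℕ) :
    coefq b ρ (i+1) = ρ * coefq b ρ i + b (i+1) := by
  unfold coefq
  rw [sum_range_succ, shift_sum]
  simp [pow_succ]

lemma evalP (a : ℕ → ℂ) (u : ℂ) (k : ℕ) : (polyP k a).eval u = coefp a u k := by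
  simp [polyP, coefp, eval_finset_sum]

lemma evalQ (b : ℕ → ℂ) (u : ℂ) (k : ℕ) : (polyQ k b).eval u = coefq b u k := by
  simp [polyQ, coefq, eval_finset_sum]

lemma telP (a : ℕ → ℂ) (ρ : ℂ) (y : ℕ → ℂ) (K : ℕ) :
    ∑ i ∈ range (K+1), coefp a ρ i * (y i - ρ * y (i+1))
      = ρ * y 0 - (∑ i ∈ range (K+1+1), a i * y i) - coefp a ρ (K+1) * y (K+1) := by
  induction K with
  | zero => simp [sum_range_succ, coefp_zero, coefp_succ]; ring
  | succ K ih =>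
      rw [sum_range_succ, ih, sum_range_succ (f := fun i => a i * y i) (n := K+1+1),
        coefp_succ a ρ (K+1)]
      ring

lemma telQ (b : ℕ → ℂ) (ρ : ℂ) (y : ℕ → ℂ) (K : ℕ) :
    ∑ i ∈ range (K+1), coefq b ρ i * (y i - ρ * y (i+1))
      = (∑ i ∈ range (K+1+1), b i * y i) - coefq b ρ (K+1) * y (K+1) := by
  induction K with
  | zero => simp [sum_range_succ, coefq_zero, coefq_succ]; ring
  | succ K ih =>
      rw [sum_range_succ, ih, sum_range_succ (f := fun i => b i * y i) (n := K+1+1),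
        coefq_succ b ρ (K+1)]
      ring

lemma factorP (a : ℕ → ℂ) (ρ : ℂ) (J : ℕ) : ∀ u : ℂ,
    (u - ρ) * coefp (fun i => -coefp a ρ i) u J = coefp a u (J+1) - coefp a ρ (J+1) := by
  induction J with
  | zero =>
      intro u
      simp only [coefp_zero, coefp_succ]
      ring
  | succ J ih =>
      intro u
      rw [coefp_succ (fun i => -coefp a ρ i) u J, coefp_succ a u (J+1), coefp_succ a ρ (J+1)]
      linear_combination u * ih u

lemma factorQ (b : ℕ → ℂ) (ρ : ℂ) (J : ℕ) : ∀ u : ℂ,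
    (u - ρ) * coefq (coefq b ρ) u J = coefq b u (J+1) - coefq b ρ (J+1) := by
  induction J with
  | zero =>
      intro u
      simp only [coefq_zero, coefq_succ]
      ring
  | succ J ih =>
      intro u
      rw [coefq_succ (coefq b ρ) u J, coefq_succ b u (J+1), coefq_succ b ρ (J+1)]
      linear_combination u * ih u

lemma polyFactorP (a : ℕ → ℂ) (ρ : ℂ) (K : ℕ) :
    (X - C ρ) * polyP K (fun i => -coefp a ρ i) = polyP (K+1) a - C (coefp a ρ (K+1)) := by
  apply Polynomial.funext
  intro u
  simp only [eval_mul, eval_sub, eval_X, eval_C, evalP]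
  exact factorP a ρ K u

lemma polyFactorQ (b : ℕ → ℂ) (ρ : ℂ) (K : ℕ) :
    (X - C ρ) * polyQ K (coefq b ρ) = polyQ (K+1) b - C (coefq b ρ (K+1)) := by
  apply Polynomial.funext
  intro u
  simp only [eval_mul, eval_sub, eval_X, eval_C, evalQ]
  exact factorQ b ρ K u

lemma derivP (a : ℕ → ℂ) (ρ : ℂ) (K : ℕ) :
    coefp (fun i => -coefp a ρ i) ρ K = (derivative (polyP (K+1) a)).eval ρ := by
  have h := congrArg (fun p => (derivative p).eval ρ) (polyFactorP a ρ K)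
  simp only [derivative_mul, derivative_sub, derivative_X, derivative_C, eval_add, eval_mul,
    eval_sub, eval_X, eval_C, sub_self, zero_mul, mul_zero, one_mul, add_zero, sub_zero,
    evalP] at h
  exact h

lemma derivQ (b : ℕ → ℂ) (ρ : ℂ) (K : ℕ) :
    coefq (coefq b ρ) ρ K = (derivative (polyQ (K+1) b)).eval ρ := by
  have h := congrArg (fun p => (derivative p).eval ρ) (polyFactorQ b ρ K)
  simp only [derivative_mul, derivative_sub, derivative_X, derivative_C, eval_add, eval_mul,
    eval_sub, eval_X, eval_C, sub_self, zero_mul, mul_zero, one_mul, add_zero, sub_zero,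
    evalQ] at h
  exact h

lemma star_to_FE (a b : ℕ → ℂ) (g : ℤ → ℂ → ℂ) (ρ : ℂ) (K : ℕ)
    (hp : coefp a ρ (K+1) = 0) (hq : coefq b ρ (K+1) = 0)
    (x : ℤ → ℂ) (hx : IsSolutionStar (K+1) a b g x) :
    IsSolutionFE (K+1) a b g ρ (fun n => x n - ρ * x (n-1)) := by
  intro n hn
  have hP := telP a ρ (fun i => x (n - i)) K
  have hQ := telQ b ρ (fun i => x (n - i)) K
  simp only [Nat.cast_add, Nat.cast_one, Nat.cast_zero, sub_zero, ← sub_sub, hp, hq,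
    zero_mul] at hP hQ
  beta_reduce
  rw [show n + 1 - 1 = n from by ring, hP, hQ, hx n hn]
  ring

lemma coefp_neg (c : ℕ → ℂ) (γ : ℂ) (j : ℕ) :
    coefp (fun i => -c i) γ j = γ ^ (j+1) + ∑ m ∈ range (j+1), c m * γ ^ (j-m) := by
  simp [coefp, neg_mul, Finset.sum_neg_distrib, sub_neg_eq_add]

lemma coefp'_eq (a : ℕ → ℂ) (ρ γ : ℂ) (j : ℕ) :
    coefp (fun i => -coefp a ρ i) γ j = coefp' a ρ γ j :=
  (coefp_neg (coefp a ρ) γ j).trans rfl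

lemma coefq'_eq (b : ℕ → ℂ) (ρ γ : ℂ) (j : ℕ) :
    coefq (coefq b ρ) γ j = coefq' b ρ γ j := rfl

/-- if `ρ, γ ≠ 0` are common roots of `P` and `Q` (with `ρ` a double root of
both when `γ = ρ`) and `x` solves (★), then `r_n := t_n - γ t_{n-1}` with
`t_n := x_n - ρ x_{n-1}` solves (FE1), and `t_{n+1} = γ t_n + r_{n+1}`,
`x_{n+1} = ρ x_n + t_{n+1}` for all `n ≥ 0`. -/
theorem statement4 (k : ℕ) (hk : 2 ≤ k) (a b : ℕ → ℂ) (g : ℤ → ℂ → ℂ)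
    (ρ γ : ℂ) (hρ : ρ ≠ 0) (hγ : γ ≠ 0)
    (hPρ : (polyP k a).eval ρ = 0) (hQρ : (polyQ k b).eval ρ = 0)
    (hPγ : (polyP k a).eval γ = 0) (hQγ : (polyQ k b).eval γ = 0)
    (hdbl : γ = ρ →
      (derivative (polyP k a)).eval ρ = 0 ∧ (derivative (polyQ k b)).eval ρ = 0)
    (x : ℤ → ℂ) (hx : IsSolutionStar k a b g x) :
    IsSolutionFE1 k a b g ρ γ
      (fun n => (x n - ρ * x (n - 1)) - γ * (x (n - 1) - ρ * x (n - 2))) ∧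
    ∀ n : ℤ, 0 ≤ n →
      (x (n + 1) - ρ * x n) =
        γ * (x n - ρ * x (n - 1)) +
          ((x (n + 1) - ρ * x n) - γ * (x n - ρ * x (n - 1))) ∧
      x (n + 1) = ρ * x n + (x (n + 1) - ρ * x n) := by
  obtain ⟨m, rfl⟩ : ∃ m, k = m + 2 := ⟨k - 2, by omega⟩
  refine ⟨?_, fun n hn => ⟨by ring, by ring⟩⟩
  have hpρ : coefp a ρ (m+1+1) = 0 := by rw [← evalP]; exact hPρ
  have hqρ : coefq b ρ (m+1+1) = 0 := by rw [← evalQ]; exact hQρ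
  have hpγ : coefp a γ (m+1+1) = 0 := by rw [← evalP]; exact hPγ
  have hqγ : coefq b γ (m+1+1) = 0 := by rw [← evalQ]; exact hQγ
  have h1 : IsSolutionFE (m+1+1) a b g ρ (fun n => x n - ρ * x (n-1)) :=
    star_to_FE a b g ρ (m+1) hpρ hqρ x hx
  have h2 : IsSolutionStar (m+1) (fun i => -coefp a ρ i) (coefq b ρ) g
      (fun n => x n - ρ * x (n-1)) := by
    intro n hn
    rw [h1 n hn]
    congr 1
    simp [neg_mul, Finset.sum_neg_distrib]
  have hpγ' : coefp (fun i => -coefp a ρ i) γ (m+1) = 0 := by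
    by_cases hcase : γ = ρ
    · subst hcase
      rw [derivP]
      exact (hdbl rfl).1
    · have h := factorP a ρ (m+1) γ
      rw [hpγ, hpρ, sub_zero] at h
      rcases mul_eq_zero.mp h with h' | h'
      · exact absurd (sub_eq_zero.mp h') hcase
      · exact h'
  have hqγ' : coefq (coefq b ρ) γ (m+1) = 0 := by
    by_cases hcase : γ = ρ
    · subst hcase
      rw [derivQ]
      exact (hdbl rfl).2
    · have h := factorQ b ρ (m+1) γ
      rw [hqγ, hqρ, sub_zero] at h
      rcases mul_eq_zero.mp h with h' | h'
      · exact absurd (sub_eq_zero.mp h') hcase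
      · exact h'
  have h3 : IsSolutionFE (m+1) (fun i => -coefp a ρ i) (coefq b ρ) g γ
      (fun n => (x n - ρ * x (n-1)) - γ * (x (n-1) - ρ * x (n-1-1))) :=
    star_to_FE (fun i => -coefp a ρ i) (coefq b ρ) g γ m hpγ' hqγ' _ h2
  have hfun : (fun n : ℤ => (x n - ρ * x (n-1)) - γ * (x (n-1) - ρ * x (n-1-1)))
      = (fun n : ℤ => (x n - ρ * x (n-1)) - γ * (x (n-1) - ρ * x (n-2))) := by
    funext n
    rw [show n - 1 - 1 = n - 2 from by ring]
  rw [hfun] at h3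
  intro n hn
  have h := h3 n hn
  simp only [coefp'_eq, coefq'_eq] at h
  exact h
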